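/- Let L be a graph with k pairwise cospectral vertices a₁, …, a_k and a vertex r ∉ {a₁, …, a_k} such that a₁, …, a_k are also pairwise cospectral in L \ r. Let G be any graph, v ∈ V(G), and let G' be the 1-sum of G and L obtained by identifying v with r. Then a₁, …, a_k are pairwise cospectral vertices of G'. -/

import Mathlib

/-!
Deleting a vertex `a ≠ r` of `L` from the 1-sum `G'` leaves the 1-sum of `G` and `L \ a`, and
Schwenk's formula for a 1-sum of `H` and `K` at `u ∼ w`,
`φ(H ∘ K) = φ(H \ u) φ(K) + φ(H) φ(K \ w) - x φ(H \ u) φ(K \ w)`,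
writes `φ(G' \ a)` as a fixed combination of `φ(L \ a)` and `φ(L \ {a, r})`, neither of which
depends on `a`. Schwenk's formula holds because the adjacency matrix of a 1-sum is the
block-diagonal matrix of `H \ u` and `K \ w`, bordered by the row and column of the shared vertex:
splitting that row by multilinearity of the determinant leaves two block-triangular matrices.
-/

/-- The characteristic polynomial `φ(G, x) = det(xI - A(G))` of a finite simple graph. -/
noncomputable def charPolyG {V : Type*} [Fintype V] [DecidableEq V] (G : SimpleGraph V) :
    Polynomial ℤ :=
  letI := Classical.decRel G.Adj
  Matrix.charpoly (G.adjMatrix ℤ)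

/-- The graph obtained from `G` by deleting the vertex `v` and all incident edges. -/
def deleteVert {V : Type*} (G : SimpleGraph V) (v : V) : SimpleGraph {u : V // u ≠ v} :=
  G.induce {u : V | u ≠ v}

/-- The graph obtained from `G` by deleting the vertices `u` and `v` and all
incident edges. -/
def deleteVert2 {V : Type*} (G : SimpleGraph V) (u v : V) :
    SimpleGraph {x : V // x ≠ u ∧ x ≠ v} :=
  G.induce {x : V | x ≠ u ∧ x ≠ v}

/-- The 1-sum of `H` and `K`, identifying `u ∈ V(H)` with `w ∈ V(K)` into a single
vertex (the `Sum.inr` vertex). -/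
def oneSum {α β : Type*} (H : SimpleGraph α) (K : SimpleGraph β) (u : α) (w : β) :
    SimpleGraph (({x : α // x ≠ u} ⊕ {y : β // y ≠ w}) ⊕ Unit) :=
  SimpleGraph.fromRel (fun a b =>
    match a, b with
    | .inl (.inl x), .inl (.inl y) => H.Adj x.1 y.1
    | .inl (.inr x), .inl (.inr y) => K.Adj x.1 y.1
    | .inl (.inl x), .inr _ => H.Adj x.1 u
    | .inl (.inr y), .inr _ => K.Adj y.1 w
    | _, _ => False)

open Matrix Polynomial

namespace Matrix

variable {n m R : Type*}

def bordered (M : Matrix n n R) (c c' : n → R) (t : R) : Matrix (n ⊕ Unit) (n ⊕ Unit) R :=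
  fromBlocks M (replicateCol Unit c) (replicateRow Unit c') (of fun _ _ => t)

variable [Fintype n] [DecidableEq n] [Fintype m] [DecidableEq m] [CommRing R]

lemma det_bordered_add_row (M : Matrix n n R) (c u u' : n → R) (s s' : R) :
    (bordered M c (u + u') (s + s')).det =
      (bordered M c u s).det + (bordered M c u' s').det := by
  have hrow : ∀ (u : n → R) s, bordered M c u s =
      (bordered M c 0 0).updateRow (.inr ()) (Sum.elim u fun _ => s) := by
    intro u s
    ext (i | i) (j | j) <;> simp [bordered, updateRow_apply]
  rw [hrow, hrow u, hrow u', ← det_updateRow_add]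
  congr 2
  ext (i | i) <;> rfl

lemma det_bordered (M : Matrix n n R) (c c' : n → R) (t : R) :
    (bordered M c c' t).det = (bordered M c c' 0).det + t * M.det := by
  have h := det_bordered_add_row M c c' 0 0 t
  rw [add_zero, zero_add] at h
  rw [h, add_right_inj, bordered, replicateRow_zero, det_fromBlocks_zero₂₁,
    det_unique (of fun _ _ => t), of_apply, mul_comm]

lemma det_bordered_fromBlocks (P : Matrix n n R) (Q : Matrix m m R) (c c' : n → R)
    (d d' : m → R) (t : R) :
    (bordered (fromBlocks P 0 0 Q) (Sum.elim c d) (Sum.elim c' d') t).det =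
      (bordered P c c' 0).det * Q.det + P.det * (bordered Q d d' t).det := by
  have hsplit : bordered (fromBlocks P 0 0 Q) (Sum.elim c d) (Sum.elim c' d') t =
      bordered (fromBlocks P 0 0 Q) (Sum.elim c d) (Sum.elim c' 0 + Sum.elim (0 : n → R) d')
        (0 + t) := by
    rw [← Sum.elim_add_add, add_zero, zero_add, zero_add]
  rw [hsplit, det_bordered_add_row]
  -- Reordering the indices makes each summand block triangular, with the border attached to `P`
  -- in the first and to `Q` in the second.
  congr 1
  · let e : (n ⊕ m) ⊕ Unit ≃ (n ⊕ Unit) ⊕ m :=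
      (Equiv.sumAssoc n m Unit).trans
        (((Equiv.refl n).sumCongr (Equiv.sumComm m Unit)).trans (Equiv.sumAssoc n Unit m).symm)
    rw [← det_reindex_self e, ← det_fromBlocks_zero₁₂ (bordered P c c' 0)
      (of fun i j => Sum.elim 0 (fun _ => d i) j) Q]
    congr 1
    ext ((i | i) | i) ((j | j) | j) <;> simp [e, bordered]
  · rw [← det_reindex_self (Equiv.sumAssoc n m Unit),
      ← det_fromBlocks_zero₂₁ P (of fun i j => Sum.elim 0 (fun _ => c i) j)
        (bordered Q d d' t)]
    congr 1
    ext (i | i | i) (j | j | j) <;> simp [bordered]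

lemma charmatrix_bordered (M : Matrix n n R) (c c' : n → R) (t : R) :
    (bordered M c c' t).charmatrix =
      bordered M.charmatrix (fun i => -C (c i)) (fun j => -C (c' j)) (X - C t) := by
  rw [bordered, bordered, charmatrix_fromBlocks]
  congr 1

lemma charpoly_bordered_fromBlocks (P : Matrix n n R) (Q : Matrix m m R) (c c' : n → R)
    (d d' : m → R) (t : R) :
    (bordered (fromBlocks P 0 0 Q) (Sum.elim c d) (Sum.elim c' d') t).charpoly =
      P.charpoly * (bordered Q d d' t).charpoly + (bordered P c c' t).charpoly * Q.charpoly
        - (X - C t) * P.charpoly * Q.charpoly := by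
  have hcol : ∀ (u : n → R) (w : m → R),
      (fun i => -C (Sum.elim u w i)) = Sum.elim (fun i => -C (u i)) (fun j => -C (w j)) := by
    intro u w; ext (i | j) <;> rfl
  simp only [charpoly, charmatrix_bordered, charmatrix_fromBlocks, Matrix.map_zero _ C_0,
    neg_zero, hcol, det_bordered_fromBlocks]
  linear_combination -Q.charmatrix.det * det_bordered P.charmatrix _ _ (X - C t)

end Matrix

section Graph

open Classical

@[simp]
lemma deleteVert_adj {V : Type*} (G : SimpleGraph V) (v : V) {x y : {u // u ≠ v}} :
    (deleteVert G v).Adj x y ↔ G.Adj x y := .rfl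

variable {V W : Type*}

lemma adjMatrix_oneSum (H : SimpleGraph V) (K : SimpleGraph W) (u : V) (w : W) :
    (oneSum H K u w).adjMatrix ℤ =
      bordered (fromBlocks ((deleteVert H u).adjMatrix ℤ) 0 0 ((deleteVert K w).adjMatrix ℤ))
        (Sum.elim (fun i => H.adjMatrix ℤ i u) (fun i => K.adjMatrix ℤ i w))
        (Sum.elim (fun j => H.adjMatrix ℤ u j) (fun j => K.adjMatrix ℤ w j)) 0 := by
  ext ((i | i) | i) ((j | j) | j) <;> rw [SimpleGraph.adjMatrix_apply] <;>
    simp [oneSum, bordered, SimpleGraph.adj_comm _ u, SimpleGraph.adj_comm _ w] <;>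
    -- in the blocks of `H` and `K`, `fromRel` symmetrizes an already symmetric, loopless relation
    exact if_congr
      ⟨fun h => h.2.elim id (·.symm), fun h => ⟨fun hij => h.ne (congrArg _ hij), .inl h⟩⟩
      rfl rfl

variable [Fintype V] [DecidableEq V] [Fintype W] [DecidableEq W]

lemma charPolyG_eq_charpoly_adjMatrix (G : SimpleGraph V) [DecidableRel G.Adj] :
    charPolyG G = (G.adjMatrix ℤ).charpoly := by
  unfold charPolyG
  congr

lemma SimpleGraph.Iso.charPolyG_eq {G : SimpleGraph V} {H : SimpleGraph W} (e : G ≃g H) :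
    charPolyG G = charPolyG H := by
  rw [charPolyG_eq_charpoly_adjMatrix, charPolyG_eq_charpoly_adjMatrix,
    ← e.reindex_adjMatrix ℤ, charpoly_reindex]

lemma charPolyG_eq_charpoly_bordered (G : SimpleGraph V) (v : V) :
    charPolyG G = (bordered ((deleteVert G v).adjMatrix ℤ) (fun i => G.adjMatrix ℤ i v)
      (fun j => G.adjMatrix ℤ v j) 0).charpoly := by
  let e : V ≃ {x // x ≠ v} ⊕ Unit :=
    (Equiv.optionSubtypeNe v).symm.trans (Equiv.optionEquivSumPUnit _)
  rw [charPolyG_eq_charpoly_adjMatrix, ← charpoly_reindex e]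
  congr 1
  ext (i | i) (j | j) <;> simp [e, bordered]

lemma charPolyG_oneSum (H : SimpleGraph V) (K : SimpleGraph W) (u : V) (w : W) :
    charPolyG (oneSum H K u w) =
      charPolyG (deleteVert H u) * charPolyG K + charPolyG H * charPolyG (deleteVert K w)
        - X * charPolyG (deleteVert H u) * charPolyG (deleteVert K w) := by
  rw [charPolyG_eq_charpoly_adjMatrix, adjMatrix_oneSum, charpoly_bordered_fromBlocks,
    charPolyG_eq_charpoly_bordered H u, charPolyG_eq_charpoly_bordered K w,
    charPolyG_eq_charpoly_adjMatrix, charPolyG_eq_charpoly_adjMatrix, C_0, sub_zero]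

def deleteVertOneSumIso (G : SimpleGraph V) (L : SimpleGraph W) (v : V) {r a : W}
    (ha : a ≠ r) :
    deleteVert (oneSum G L v r) (.inl (.inr ⟨a, ha⟩)) ≃g
      oneSum G (deleteVert L a) v ⟨r, ha.symm⟩ where
  toFun
    | ⟨.inl (.inl x), _⟩ => .inl (.inl x)
    | ⟨.inl (.inr y), h⟩ =>
        .inl (.inr ⟨⟨y.1, fun hya => h (by simp [← hya])⟩,
          fun hyr => y.2 (congrArg Subtype.val hyr)⟩)
    | ⟨.inr u, _⟩ => .inr u
  invFun
    | .inl (.inl x) => ⟨.inl (.inl x), by simp⟩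
    | .inl (.inr y) =>
        ⟨.inl (.inr ⟨y.1.1, fun hyr => y.2 (Subtype.ext hyr)⟩),
          fun h => y.1.2 (by simpa using h)⟩
    | .inr u => ⟨.inr u, by simp⟩
  left_inv := by rintro ⟨(x | y) | u, h⟩ <;> rfl
  right_inv := by rintro ((x | y) | u) <;> rfl
  map_rel_iff' := by
    rintro ⟨(x | y) | u, hx⟩ ⟨(x' | y') | u', hy⟩ <;> simp [oneSum, Subtype.ext_iff]

def deleteVertDeleteVertIso (L : SimpleGraph W) {a r : W} (hra : r ≠ a) :
    deleteVert (deleteVert L a) ⟨r, hra⟩ ≃g deleteVert2 L a r where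
  toFun x := ⟨x.1.1, x.1.2, fun h => x.2 (Subtype.ext h)⟩
  invFun y := ⟨⟨y.1, y.2.1⟩, fun h => y.2.2 (congrArg Subtype.val h)⟩
  left_inv _ := rfl
  right_inv _ := rfl
  map_rel_iff' := .rfl

lemma charPolyG_deleteVert_oneSum (G : SimpleGraph V) (L : SimpleGraph W) (v : V) {r a : W}
    (ha : a ≠ r) :
    charPolyG (deleteVert (oneSum G L v r) (.inl (.inr ⟨a, ha⟩))) =
      charPolyG (deleteVert G v) * charPolyG (deleteVert L a)
        + charPolyG G * charPolyG (deleteVert2 L a r)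
        - X * charPolyG (deleteVert G v) * charPolyG (deleteVert2 L a r) := by
  rw [(deleteVertOneSumIso G L v ha).charPolyG_eq, charPolyG_oneSum,
    (deleteVertDeleteVertIso L ha.symm).charPolyG_eq]

end Graph

/-- If `L` has pairwise cospectral vertices `A` and a vertex `r ∉ A` such that the
vertices of `A` remain pairwise cospectral in `L \ r`, then in the 1-sum `G'` of any
graph `G` (at a vertex `v`) with `L` (at `r`), the vertices of `A` are pairwise
cospectral in `G'`. -/
theorem stmt12 {α β : Type*} [Fintype α] [DecidableEq α] [Fintype β] [DecidableEq β]
    (G : SimpleGraph α) (L : SimpleGraph β) (v : α) (r : β) (A : Finset β) (hr : r ∉ A)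
    (hcosL : ∀ a ∈ A, ∀ b ∈ A, charPolyG (deleteVert L a) = charPolyG (deleteVert L b))
    (hcosLr : ∀ a ∈ A, ∀ b ∈ A,
      charPolyG (deleteVert2 L a r) = charPolyG (deleteVert2 L b r)) :
    ∀ a, ∀ ha : a ∈ A, ∀ b, ∀ hb : b ∈ A,
      charPolyG (deleteVert (oneSum G L v r) (.inl (.inr ⟨a, fun h => hr (h ▸ ha)⟩))) =
        charPolyG (deleteVert (oneSum G L v r) (.inl (.inr ⟨b, fun h => hr (h ▸ hb)⟩))) := by
  intro a ha b hb
  rw [charPolyG_deleteVert_oneSum, charPolyG_deleteVert_oneSum, hcosL a ha b hb,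
    hcosLr a ha b hb]
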